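/- The pseudo-distance δ(g, g̃) := ‖g^{-1} ⋆ g̃‖_{G_n} on the free step-2 Carnot group G_n = ℝ^n × so(n) satisfies the pseudo-triangle inequality: for all g, h, g̃ ∈ G_n, δ(g, g̃) ≤ (3/2)·( δ(g, h) + δ(h, g̃) ). -/
import Mathlib

open Finset

/-- Cauchy–Schwarz, sqrt form. -/
lemma my_cs {ι : Type*} (s : Finset ι) (f g : ι → ℝ) :
    ∑ i ∈ s, f i * g i ≤ Real.sqrt (∑ i ∈ s, f i ^ 2) * Real.sqrt (∑ i ∈ s, g i ^ 2) := by
  have h := Finset.sum_mul_sq_le_sq_mul_sq s f g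
  have h1 : ∑ i ∈ s, f i * g i ≤ |∑ i ∈ s, f i * g i| := le_abs_self _
  calc ∑ i ∈ s, f i * g i ≤ Real.sqrt ((∑ i ∈ s, f i * g i) ^ 2) := by
        rw [Real.sqrt_sq_eq_abs]; exact h1
    _ ≤ Real.sqrt ((∑ i ∈ s, f i ^ 2) * ∑ i ∈ s, g i ^ 2) := Real.sqrt_le_sqrt h
    _ = _ := Real.sqrt_mul (by positivity) _

/-- Minkowski for sums of squares. -/
lemma my_mink {ι : Type*} (s : Finset ι) (f g : ι → ℝ) :
    ∑ i ∈ s, (f i + g i) ^ 2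
      ≤ (Real.sqrt (∑ i ∈ s, f i ^ 2) + Real.sqrt (∑ i ∈ s, g i ^ 2)) ^ 2 := by
  have hcs := my_cs s f g
  have hf : Real.sqrt (∑ i ∈ s, f i ^ 2) ^ 2 = ∑ i ∈ s, f i ^ 2 :=
    Real.sq_sqrt (by positivity)
  have hg : Real.sqrt (∑ i ∈ s, g i ^ 2) ^ 2 = ∑ i ∈ s, g i ^ 2 :=
    Real.sq_sqrt (by positivity)
  have hexp : ∑ i ∈ s, (f i + g i) ^ 2
      = ∑ i ∈ s, f i ^ 2 + 2 * ∑ i ∈ s, f i * g i + ∑ i ∈ s, g i ^ 2 := by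
    simp_rw [add_sq]
    rw [Finset.sum_add_distrib, Finset.sum_add_distrib, Finset.mul_sum]
    congr 1
    · congr 1
      exact Finset.sum_congr rfl fun i _ => by ring
  nlinarith [hcs, hf, hg]

/-- sqrt-form Minkowski. -/
lemma my_mink' {ι : Type*} (s : Finset ι) (f g : ι → ℝ) :
    Real.sqrt (∑ i ∈ s, (f i + g i) ^ 2)
      ≤ Real.sqrt (∑ i ∈ s, f i ^ 2) + Real.sqrt (∑ i ∈ s, g i ^ 2) := by
  have := my_mink s f g
  calc Real.sqrt (∑ i ∈ s, (f i + g i) ^ 2)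
      ≤ Real.sqrt ((Real.sqrt (∑ i ∈ s, f i ^ 2) + Real.sqrt (∑ i ∈ s, g i ^ 2)) ^ 2) :=
        Real.sqrt_le_sqrt this
    _ = _ := Real.sqrt_sq (by positivity)

/-- Bound on the wedge term. -/
lemma my_wedge {n : ℕ} (u v : Fin n → ℝ) :
    ∑ p ∈ Finset.univ.filter (fun p : Fin n × Fin n => p.1 < p.2),
        (u p.1 * v p.2 - v p.1 * u p.2) ^ 2
      ≤ 4 * (∑ i, u i ^ 2) * (∑ i, v i ^ 2) := by
  have h1 : ∑ p ∈ Finset.univ.filter (fun p : Fin n × Fin n => p.1 < p.2),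
        (u p.1 * v p.2 - v p.1 * u p.2) ^ 2
      ≤ ∑ p : Fin n × Fin n, (u p.1 * v p.2 - v p.1 * u p.2) ^ 2 :=
    Finset.sum_le_sum_of_subset_of_nonneg (Finset.filter_subset _ _)
      (fun _ _ _ => sq_nonneg _)
  have h2 : ∑ p : Fin n × Fin n, (u p.1 * v p.2 - v p.1 * u p.2) ^ 2
      ≤ ∑ p : Fin n × Fin n,
          (2 * (u p.1 ^ 2 * v p.2 ^ 2) + 2 * (v p.1 ^ 2 * u p.2 ^ 2)) :=
    Finset.sum_le_sum fun p _ => by nlinarith [sq_nonneg (u p.1 * v p.2 + v p.1 * u p.2)]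
  have h3 : ∑ p : Fin n × Fin n,
          (2 * (u p.1 ^ 2 * v p.2 ^ 2) + 2 * (v p.1 ^ 2 * u p.2 ^ 2))
      = 4 * (∑ i, u i ^ 2) * (∑ i, v i ^ 2) := by
    rw [Fintype.sum_prod_type]
    simp_rw [Finset.sum_add_distrib, ← Finset.mul_sum, ← Finset.sum_mul]
    ring
  linarith

/-- Arithmetic master lemma. -/
lemma my_master (A B P Q D T : ℝ) (hA : 0 ≤ A) (hB : 0 ≤ B) (hP : 0 ≤ P) (hQ : 0 ≤ Q)
    (hD : D ≤ (A + B) ^ 2) (hT : Real.sqrt T ≤ P + Q + A * B) :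
    Real.sqrt (D + Real.sqrt T) ≤
      (3 / 2 : ℝ) * (Real.sqrt (A ^ 2 + P) + Real.sqrt (B ^ 2 + Q)) := by
  set a := Real.sqrt (A ^ 2 + P) with ha
  set b := Real.sqrt (B ^ 2 + Q) with hb
  have ha2 : a ^ 2 = A ^ 2 + P := Real.sq_sqrt (by positivity)
  have hb2 : b ^ 2 = B ^ 2 + Q := Real.sq_sqrt (by positivity)
  have ha0 : 0 ≤ a := Real.sqrt_nonneg _
  have hb0 : 0 ≤ b := Real.sqrt_nonneg _
  have hAa : A ≤ a := by nlinarith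
  have hBb : B ≤ b := by nlinarith
  have hab : A * B ≤ a * b := mul_le_mul hAa hBb hB ha0
  have key : D + Real.sqrt T ≤ ((3 / 2 : ℝ) * (a + b)) ^ 2 := by nlinarith
  calc Real.sqrt (D + Real.sqrt T) ≤ Real.sqrt (((3 / 2 : ℝ) * (a + b)) ^ 2) :=
        Real.sqrt_le_sqrt key
    _ = (3 / 2 : ℝ) * (a + b) := Real.sqrt_sq (by positivity)


/-- The pseudo-norm `‖(x,z)‖ = √(‖x‖₂² + ‖z‖₂)` on `ℝⁿ × so(n)`. -/
noncomputable def normGn {n : ℕ} (x : Fin n → ℝ) (z : Matrix (Fin n) (Fin n) ℝ) : ℝ :=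
  Real.sqrt ((∑ i, x i ^ 2) +
    Real.sqrt (∑ p ∈ Finset.univ.filter (fun p : Fin n × Fin n => p.1 < p.2),
      (z p.1 p.2) ^ 2))

/-- The pseudo-distance `δ(g,g̃) = ‖g⁻¹ ⋆ g̃‖_{G_n}` on the free step-2 Carnot group
`G_n = ℝⁿ × so(n)`; explicitly `g⁻¹ ⋆ g̃ = (x̃ − x, z̃ − z − ½ x ⊙ x̃)`. -/
noncomputable def deltaGn {n : ℕ} (g h : (Fin n → ℝ) × Matrix (Fin n) (Fin n) ℝ) : ℝ :=
  normGn (h.1 - g.1)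
    (h.2 - g.2 - (1 / 2 : ℝ) • Matrix.of (fun i j => g.1 i * h.1 j - h.1 i * g.1 j))

/-- The pseudo-triangle inequality: `δ(g, g̃) ≤ (3/2)(δ(g,h) + δ(h,g̃))`. -/
theorem deltaGn_pseudo_triangle {n : ℕ}
    (g h gt : (Fin n → ℝ) × Matrix (Fin n) (Fin n) ℝ) :
    deltaGn g gt ≤ (3 / 2 : ℝ) * (deltaGn g h + deltaGn h gt) := by
  classical
  set filt := Finset.univ.filter (fun p : Fin n × Fin n => p.1 < p.2) with hfilt
  set u : Fin n → ℝ := fun i => h.1 i - g.1 i with hu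
  set v : Fin n → ℝ := fun i => gt.1 i - h.1 i with hv
  set Z1 : Fin n × Fin n → ℝ := fun p =>
    h.2 p.1 p.2 - g.2 p.1 p.2 - 1 / 2 * (g.1 p.1 * h.1 p.2 - h.1 p.1 * g.1 p.2) with hZ1
  set Z2 : Fin n × Fin n → ℝ := fun p =>
    gt.2 p.1 p.2 - h.2 p.1 p.2 - 1 / 2 * (h.1 p.1 * gt.1 p.2 - gt.1 p.1 * h.1 p.2) with hZ2
  set S1 := ∑ i, u i ^ 2 with hS1
  set S2 := ∑ i, v i ^ 2 with hS2
  set T1 := ∑ p ∈ filt, Z1 p ^ 2 with hT1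
  set T2 := ∑ p ∈ filt, Z2 p ^ 2 with hT2
  have hS1n : (0:ℝ) ≤ S1 := Finset.sum_nonneg fun _ _ => sq_nonneg _
  have hS2n : (0:ℝ) ≤ S2 := Finset.sum_nonneg fun _ _ => sq_nonneg _
  have hT1n : (0:ℝ) ≤ T1 := Finset.sum_nonneg fun _ _ => sq_nonneg _
  have hT2n : (0:ℝ) ≤ T2 := Finset.sum_nonneg fun _ _ => sq_nonneg _
  -- unfold the three deltaGn's
  have e1 : deltaGn g h = Real.sqrt (S1 + Real.sqrt T1) := by
    unfold deltaGn normGn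
    simp only [Matrix.sub_apply, Matrix.smul_apply, Matrix.of_apply, smul_eq_mul,
      Pi.sub_apply, hS1, hT1, hZ1, hu, hfilt]
  have e2 : deltaGn h gt = Real.sqrt (S2 + Real.sqrt T2) := by
    unfold deltaGn normGn
    simp only [Matrix.sub_apply, Matrix.smul_apply, Matrix.of_apply, smul_eq_mul,
      Pi.sub_apply, hS2, hT2, hZ2, hv, hfilt]
  set D := ∑ i, (gt.1 i - g.1 i) ^ 2 with hD
  set T := ∑ p ∈ filt,
      (gt.2 p.1 p.2 - g.2 p.1 p.2 -
        1 / 2 * (g.1 p.1 * gt.1 p.2 - gt.1 p.1 * g.1 p.2)) ^ 2 with hT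
  have e3 : deltaGn g gt = Real.sqrt (D + Real.sqrt T) := by
    unfold deltaGn normGn
    simp only [Matrix.sub_apply, Matrix.smul_apply, Matrix.of_apply, smul_eq_mul,
      Pi.sub_apply, hD, hT, hfilt]
  rw [e1, e2, e3]
  -- bound on D
  have hDle : D ≤ (Real.sqrt S1 + Real.sqrt S2) ^ 2 := by
    have : D = ∑ i, (u i + v i) ^ 2 := Finset.sum_congr rfl fun i _ => by
      simp only [hu, hv]; ring
    rw [this]
    exact my_mink _ _ _
  -- bound on T
  have hTle : Real.sqrt T ≤ Real.sqrt T1 + Real.sqrt T2 + Real.sqrt S1 * Real.sqrt S2 := by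
    set W : Fin n × Fin n → ℝ := fun p => u p.1 * v p.2 - v p.1 * u p.2 with hW
    have hTid : T = ∑ p ∈ filt, (Z1 p + (Z2 p + 1 / 2 * W p)) ^ 2 :=
      Finset.sum_congr rfl fun p _ => by
        simp only [hZ1, hZ2, hW, hu, hv]; ring
    have step1 : Real.sqrt T ≤ Real.sqrt T1 +
        Real.sqrt (∑ p ∈ filt, (Z2 p + 1 / 2 * W p) ^ 2) := by
      rw [hTid]; exact my_mink' _ _ _
    have step2 : Real.sqrt (∑ p ∈ filt, (Z2 p + 1 / 2 * W p) ^ 2) ≤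
        Real.sqrt T2 + Real.sqrt (∑ p ∈ filt, (1 / 2 * W p) ^ 2) := my_mink' _ _ _
    have step3 : Real.sqrt (∑ p ∈ filt, (1 / 2 * W p) ^ 2) ≤ Real.sqrt S1 * Real.sqrt S2 := by
      have hq : ∑ p ∈ filt, (1 / 2 * W p) ^ 2 ≤ S1 * S2 := by
        have h4 : ∑ p ∈ filt, W p ^ 2 ≤ 4 * S1 * S2 := my_wedge u v
        have : ∑ p ∈ filt, (1 / 2 * W p) ^ 2 = 1 / 4 * ∑ p ∈ filt, W p ^ 2 := by
          rw [Finset.mul_sum]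
          exact Finset.sum_congr rfl fun p _ => by ring
        rw [this]; linarith
      calc Real.sqrt (∑ p ∈ filt, (1 / 2 * W p) ^ 2) ≤ Real.sqrt (S1 * S2) :=
            Real.sqrt_le_sqrt hq
        _ = Real.sqrt S1 * Real.sqrt S2 := Real.sqrt_mul hS1n _
    linarith
  have := my_master (Real.sqrt S1) (Real.sqrt S2) (Real.sqrt T1) (Real.sqrt T2) D T
    (Real.sqrt_nonneg _) (Real.sqrt_nonneg _) (Real.sqrt_nonneg _) (Real.sqrt_nonneg _)
    hDle hTle
  rwa [Real.sq_sqrt hS1n, Real.sq_sqrt hS2n] at this
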